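/- arXiv:1006.3461 — 2 statements merged into one kernel-verified Lean document; each statement's English description precedes it below -/
import Mathlib

section
/- Let Λ be a set with a symmetric nonnegative distance function d, let X ⊆ Λ be finite, let r > 0, and let N_r ∈ ℕ be such that for every x ∈ X the set {y ∈ X : d(x,y) ≤ r} has at most N_r elements. Let (q_n)_{n≥2} be the sequence of natural numbers determined by q₂ = 1, q₃ = 2 and q_{n+2} = (n+1)·q_{n+1} + q_n for n ≥ 2. Then for every n ≥ 2, the number N(X,n,r) of n-element subsets Y ⊆ X with Δ(Y) ≤ r satisfies N(X,n,r) ≤ q_n · (|X| · N_r)^{n/2} (the right-hand side being a real number, with real exponent n/2). -/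
/-!
Call `Y` *isolation-free* if every point of `Y` has another point of `Y` within distance `r`;
a set of spread at most `r` is isolation-free. Let `F n` be the number of isolation-free
`n`-subsets of `X` and `M = |X| N_r`. An isolation-free `(n+2)`-set `Y` either stays
isolation-free after deleting some point `y` (then `Y` arises from an isolation-free
`(n+1)`-set by adding a neighbour of one of its `n+1` points), or every point of `Y` has a
unique neighbour and these pair up, so that deleting a pair `{y, z}` leaves an isolation-free
`n`-set (then `Y` is determined by `y ∈ X`, a neighbour `z` of `y` and the `n`-set). Hence
`F (n+2) ≤ (n+1) N_r F (n+1) + M F n`. Since `N_r ≤ |X|` may be assumed, `N_r ≤ √M`, and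
induction along the recursion of `qseq` gives `F n ≤ qseq n · √M ^ n`.
-/

open scoped BigOperators

/-- The distance `d(S,T) = min_{s∈S,t∈T} d(s,t)` between two (nonempty, finite) subsets,
realized as an infimum. -/
noncomputable def setDist {Λ : Type*} (d : Λ → Λ → ℝ) (S T : Finset Λ) : ℝ :=
  sInf {r : ℝ | ∃ s ∈ S, ∃ t ∈ T, r = d s t}

/-- The spread `Δ(Y) = max_{y∈Y} d(y, Y∖{y})`, realized as a supremum. -/
noncomputable def spread {Λ : Type*} [DecidableEq Λ] (d : Λ → Λ → ℝ) (Y : Finset Λ) : ℝ :=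
  sSup {r : ℝ | ∃ y ∈ Y, r = setDist d {y} (Y.erase y)}

/-- The 2-spread `Δ₂(Y) = max_{J ⊆ Y, |J| = 2} d(J, Y∖J)`. -/
noncomputable def spread2 {Λ : Type*} [DecidableEq Λ] (d : Λ → Λ → ℝ) (Y : Finset Λ) : ℝ :=
  sSup {r : ℝ | ∃ J : Finset Λ, J ⊆ Y ∧ J.card = 2 ∧ r = setDist d J (Y \ J)}

/-- `N(X,n,r)`: the number of `n`-element subsets `Y ⊆ X` with `Δ(Y) ≤ r`. -/
noncomputable def countSpread {Λ : Type*} [DecidableEq Λ] (d : Λ → Λ → ℝ)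
    (X : Finset Λ) (n : ℕ) (r : ℝ) : ℕ :=
  {Y : Finset Λ | Y ⊆ X ∧ Y.card = n ∧ spread d Y ≤ r}.ncard

/-- The sequence `q₂ = 1`, `q₃ = 2`, `q_{n+2} = (n+1)·q_{n+1} + q_n` (for `n ≥ 2`). -/
def qseq : ℕ → ℕ
  | 0 => 0
  | 1 => 0
  | 2 => 1
  | 3 => 2
  | (n + 4) => (n + 3) * qseq (n + 3) + qseq (n + 2)

lemma qseq_add_two {n : ℕ} (hn : 1 ≤ n) : qseq (n + 2) = (n + 1) * qseq (n + 1) + qseq n := by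
  obtain ⟨m, rfl⟩ := Nat.exists_eq_add_of_le' hn
  cases m <;> rfl

-- `qseq 1 = 0` and `qseq_add_two` holds from `n = 1`, so a sequence starting with `a 0 ≤ 1`
-- (one empty set) and `a 1 ≤ 0` (no admissible singleton) is dominated from `n = 1` on.
lemma le_qseq_mul_pow {a : ℕ → ℝ} {s : ℝ} (hs : 0 ≤ s) (h0 : a 0 ≤ 1) (h1 : a 1 ≤ 0)
    (hstep : ∀ k : ℕ, a (k + 2) ≤ (k + 1) * s * a (k + 1) + s ^ 2 * a k) {n : ℕ}
    (hn : 1 ≤ n) : a n ≤ qseq n * s ^ n := by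
  have hpair : ∀ k, a (k + 1) ≤ qseq (k + 1) * s ^ (k + 1) ∧
      a (k + 2) ≤ qseq (k + 2) * s ^ (k + 2) := by
    intro k
    induction k with
    | zero =>
      have h2 := hstep 0
      simp only [qseq, Nat.cast_zero, Nat.cast_one, zero_mul, one_mul, zero_add] at h2 ⊢
      exact ⟨h1, by nlinarith [mul_nonpos_of_nonneg_of_nonpos hs h1, sq_nonneg s]⟩
    | succ k ih =>
      refine ⟨ih.2, ?_⟩
      calc a (k + 3) ≤ (k + 2) * s * a (k + 2) + s ^ 2 * a (k + 1) := by
            convert hstep (k + 1) using 2; push_cast; ring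
        _ ≤ (k + 2) * s * (qseq (k + 2) * s ^ (k + 2)) +
              s ^ 2 * (qseq (k + 1) * s ^ (k + 1)) := by
            gcongr
            exacts [ih.2, ih.1]
        _ = qseq (k + 3) * s ^ (k + 3) := by
            rw [qseq_add_two (by omega : 1 ≤ k + 1)]
            push_cast
            ring
  obtain ⟨k, rfl⟩ := Nat.exists_eq_add_of_le' hn
  exact (hpair k).1

section

open Finset
open scoped Classical

variable {Λ : Type*} (d : Λ → Λ → ℝ) (r : ℝ)

def NoIsolatedPoint (Y : Finset Λ) : Prop := ∀ u ∈ Y, ∃ v ∈ Y, v ≠ u ∧ d u v ≤ r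

noncomputable def noIsolatedSets (X : Finset Λ) (n : ℕ) : Finset (Finset Λ) :=
  (X.powersetCard n).filter (NoIsolatedPoint d r)

noncomputable def nbhd (X : Finset Λ) (v : Λ) : Finset Λ := X.filter (d v · ≤ r)

variable {d r}

lemma mem_noIsolatedSets {X Y : Finset Λ} {n : ℕ} :
    Y ∈ noIsolatedSets d r X n ↔ Y ⊆ X ∧ Y.card = n ∧ NoIsolatedPoint d r Y := by
  simp [noIsolatedSets, mem_powersetCard, and_assoc]

lemma mem_nbhd {X : Finset Λ} {v y : Λ} : y ∈ nbhd d r X v ↔ y ∈ X ∧ d v y ≤ r :=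
  mem_filter

lemma ncard_setOf_eq_card_nbhd {X : Finset Λ} {v : Λ} :
    ({y | y ∈ X ∧ d v y ≤ r} : Set Λ).ncard = (nbhd d r X v).card := by
  rw [← Set.ncard_coe_finset]
  congr 1
  ext y
  simp [mem_nbhd]

lemma exists_setDist_eq {S T : Finset Λ} (hS : S.Nonempty) (hT : T.Nonempty) :
    ∃ s ∈ S, ∃ t ∈ T, setDist d S T = d s t := by
  have hset : {x : ℝ | ∃ s ∈ S, ∃ t ∈ T, x = d s t} = Set.image2 d S T := by
    ext x
    simp [Set.image2, eq_comm]
  obtain ⟨s, hs⟩ := hS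
  obtain ⟨t, ht⟩ := hT
  have hmem := (Set.Nonempty.image2 ⟨s, hs⟩ ⟨t, ht⟩ : (Set.image2 d S T).Nonempty).csInf_mem
    (S.finite_toSet.image2 d T.finite_toSet)
  obtain ⟨s', hs', t', ht', heq⟩ := hmem
  exact ⟨s', hs', t', ht', by rw [setDist, hset, ← heq]⟩

lemma setDist_le_spread [DecidableEq Λ] {Y : Finset Λ} {y : Λ} (hy : y ∈ Y) :
    setDist d {y} (Y.erase y) ≤ spread d Y := by
  have hfin : {x : ℝ | ∃ y ∈ Y, x = setDist d {y} (Y.erase y)}.Finite :=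
    (Y.finite_toSet.image fun y => setDist d {y} (Y.erase y)).subset
      (by rintro _ ⟨x, hx, rfl⟩; exact ⟨x, hx, rfl⟩)
  exact le_csSup hfin.bddAbove ⟨y, hy, rfl⟩

lemma noIsolatedPoint_of_spread_le [DecidableEq Λ] {Y : Finset Λ} (hY : 2 ≤ Y.card)
    (h : spread d Y ≤ r) : NoIsolatedPoint d r Y := by
  intro y hy
  have hne : (Y.erase y).Nonempty := by
    rw [← card_pos, card_erase_of_mem hy]
    omega
  obtain ⟨y', hy', t, ht, heq⟩ := exists_setDist_eq (d := d) (singleton_nonempty y) hne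
  rw [mem_singleton] at hy'
  subst hy'
  exact ⟨t, mem_of_mem_erase ht, ne_of_mem_erase ht, heq ▸ (setDist_le_spread hy).trans h⟩

lemma countSpread_le_card_noIsolatedSets [DecidableEq Λ] (X : Finset Λ) {n : ℕ}
    (hn : 2 ≤ n) : countSpread d X n r ≤ (noIsolatedSets d r X n).card := by
  rw [countSpread, ← Set.ncard_coe_finset]
  refine Set.ncard_le_ncard ?_ (finite_toSet _)
  rintro Y ⟨hYX, hYn, hY⟩
  rw [mem_coe, mem_noIsolatedSets]
  exact ⟨hYX, hYn, noIsolatedPoint_of_spread_le (hYn ▸ hn) hY⟩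

lemma card_noIsolatedSets_zero_le (X : Finset Λ) : (noIsolatedSets d r X 0).card ≤ 1 :=
  (card_filter_le _ _).trans (by rw [powersetCard_zero, card_singleton])

lemma noIsolatedSets_one (X : Finset Λ) : noIsolatedSets d r X 1 = ∅ := by
  refine eq_empty_of_forall_notMem fun Y hY => ?_
  obtain ⟨-, hcard, hY⟩ := mem_noIsolatedSets.mp hY
  obtain ⟨u, rfl⟩ := card_eq_one.mp hcard
  obtain ⟨v, hv, hvu, -⟩ := hY u (mem_singleton_self u)
  exact hvu (mem_singleton.mp hv)

lemma exists_unique_nbr_of_not_noIsolatedPoint_erase {Y : Finset Λ}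
    (hY : NoIsolatedPoint d r Y) {y : Λ}
    (h : ¬ NoIsolatedPoint d r (Y.erase y)) :
    ∃ w ∈ Y, w ≠ y ∧ d w y ≤ r ∧ ∀ v ∈ Y, v ≠ w → d w v ≤ r → v = y := by
  simp only [NoIsolatedPoint, not_forall, not_exists, not_and, not_le] at h
  obtain ⟨w, hw, hfar⟩ := h
  have huniq : ∀ v ∈ Y, v ≠ w → d w v ≤ r → v = y := fun v hv hvw hd =>
    by_contra fun hvy => (hfar v (mem_erase.mpr ⟨hvy, hv⟩) hvw).not_ge hd
  obtain ⟨v, hv, hvw, hd⟩ := hY w (mem_of_mem_erase hw)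
  exact ⟨w, mem_of_mem_erase hw, ne_of_mem_erase hw, huniq v hv hvw hd ▸ hd, huniq⟩

/-- The hypotheses force the `r`-neighbourhood graph on `Y` to be a perfect matching. -/
lemma exists_nbr_noIsolatedPoint_erase_erase (hsym : ∀ x y, d x y = d y x) {Y : Finset Λ}
    (hY : NoIsolatedPoint d r Y) (hdel : ∀ y ∈ Y, ¬ NoIsolatedPoint d r (Y.erase y))
    {y : Λ} (hy : y ∈ Y) :
    ∃ z ∈ Y, z ≠ y ∧ d y z ≤ r ∧ NoIsolatedPoint d r ((Y.erase y).erase z) := by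
  obtain ⟨z, hz, hzy, hdzy, hz_uniq⟩ :=
    exists_unique_nbr_of_not_noIsolatedPoint_erase hY (hdel y hy)
  obtain ⟨u, hu, huz, hduz, hu_uniq⟩ :=
    exists_unique_nbr_of_not_noIsolatedPoint_erase hY (hdel z hz)
  rw [hz_uniq u hu huz (hsym z u ▸ hduz)] at hu_uniq
  refine ⟨z, hz, hzy, hsym y z ▸ hdzy, fun w hw => ?_⟩
  obtain ⟨hwz, hwy, hwY⟩ : w ≠ z ∧ w ≠ y ∧ w ∈ Y := by simpa using hw
  obtain ⟨v, hv, hvw, hdwv⟩ := hY w hwY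
  have hvy : v ≠ y := by
    rintro rfl
    exact hwz (hu_uniq w hwY hwy (hsym w v ▸ hdwv))
  have hvz : v ≠ z := by
    rintro rfl
    exact hwy (hz_uniq w hwY hwz (hsym w v ▸ hdwv))
  exact ⟨v, by simp [hv, hvy, hvz], hvw, hdwv⟩

variable {X : Finset Λ} {Nr : ℕ}

lemma card_filter_exists_noIsolatedPoint_erase_le (hsym : ∀ x y, d x y = d y x)
    (hN : ∀ x ∈ X, (nbhd d r X x).card ≤ Nr) (n : ℕ) :
    ((noIsolatedSets d r X (n + 2)).filter
        fun Y => ∃ y ∈ Y, NoIsolatedPoint d r (Y.erase y)).card ≤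
      (n + 1) * Nr * (noIsolatedSets d r X (n + 1)).card := by
  have hcover : (noIsolatedSets d r X (n + 2)).filter
      (fun Y => ∃ y ∈ Y, NoIsolatedPoint d r (Y.erase y)) ⊆
      (noIsolatedSets d r X (n + 1)).biUnion
        fun Y' => (Y'.biUnion (nbhd d r X)).image (insert · Y') := by
    intro Y hY
    obtain ⟨hYF, y, hy, hYy⟩ := mem_filter.mp hY
    obtain ⟨hYX, hYcard, hYiso⟩ := mem_noIsolatedSets.mp hYF
    obtain ⟨v, hv, hvy, hdyv⟩ := hYiso y hy
    simp only [mem_biUnion, mem_image]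
    refine ⟨Y.erase y, mem_noIsolatedSets.mpr ⟨(erase_subset y Y).trans hYX, ?_, hYy⟩,
      y, ⟨v, mem_erase.mpr ⟨hvy, hv⟩, mem_nbhd.mpr ⟨hYX hy, hsym v y ▸ hdyv⟩⟩,
      insert_erase hy⟩
    rw [card_erase_of_mem hy, hYcard]
    rfl
  refine (card_le_card hcover).trans ?_
  rw [mul_comm]
  refine card_biUnion_le_card_mul _ _ _ fun Y' hY' => card_image_le.trans ?_
  obtain ⟨hY'X, hY'card, -⟩ := mem_noIsolatedSets.mp hY'
  rw [← hY'card]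
  exact card_biUnion_le_card_mul _ _ _ fun v hv => hN v (hY'X hv)

lemma card_filter_not_exists_noIsolatedPoint_erase_le (hsym : ∀ x y, d x y = d y x)
    (hN : ∀ x ∈ X, (nbhd d r X x).card ≤ Nr) (n : ℕ) :
    ((noIsolatedSets d r X (n + 2)).filter
        fun Y => ¬ ∃ y ∈ Y, NoIsolatedPoint d r (Y.erase y)).card ≤
      X.card * Nr * (noIsolatedSets d r X n).card := by
  have hcover : (noIsolatedSets d r X (n + 2)).filter
      (fun Y => ¬ ∃ y ∈ Y, NoIsolatedPoint d r (Y.erase y)) ⊆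
      X.biUnion fun y => (nbhd d r X y).biUnion
        fun z => (noIsolatedSets d r X n).image fun Y'' => insert y (insert z Y'') := by
    intro Y hY
    obtain ⟨hYF, hdel⟩ := mem_filter.mp hY
    push Not at hdel
    obtain ⟨hYX, hYcard, hYiso⟩ := mem_noIsolatedSets.mp hYF
    obtain ⟨y, hy⟩ := card_pos.mp (by omega : 0 < Y.card)
    obtain ⟨z, hz, hzy, hdyz, hrest⟩ :=
      exists_nbr_noIsolatedPoint_erase_erase hsym hYiso hdel hy
    have hz' : z ∈ Y.erase y := mem_erase.mpr ⟨hzy, hz⟩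
    simp only [mem_biUnion, mem_image]
    refine ⟨y, hYX hy, z, mem_nbhd.mpr ⟨hYX hz, hdyz⟩, (Y.erase y).erase z,
      mem_noIsolatedSets.mpr ⟨?_, ?_, hrest⟩, by rw [insert_erase hz', insert_erase hy]⟩
    · exact (erase_subset _ _).trans ((erase_subset _ _).trans hYX)
    · rw [card_erase_of_mem hz', card_erase_of_mem hy, hYcard]
      rfl
  refine (card_le_card hcover).trans ?_
  rw [mul_assoc]
  refine card_biUnion_le_card_mul _ _ _ fun y hy => ?_
  refine (card_biUnion_le_card_mul _ _ _ fun z _ => card_image_le).trans ?_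
  exact Nat.mul_le_mul_right _ (hN y hy)

lemma card_noIsolatedSets_add_two_le (hsym : ∀ x y, d x y = d y x)
    (hN : ∀ x ∈ X, (nbhd d r X x).card ≤ Nr) (n : ℕ) :
    (noIsolatedSets d r X (n + 2)).card ≤
      (n + 1) * Nr * (noIsolatedSets d r X (n + 1)).card +
        X.card * Nr * (noIsolatedSets d r X n).card := by
  rw [← card_filter_add_card_filter_not fun Y => ∃ y ∈ Y, NoIsolatedPoint d r (Y.erase y)]
  exact add_le_add (card_filter_exists_noIsolatedPoint_erase_le hsym hN n)
    (card_filter_not_exists_noIsolatedPoint_erase_le hsym hN n)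

lemma card_noIsolatedSets_le (hsym : ∀ x y, d x y = d y x)
    (hN : ∀ x ∈ X, (nbhd d r X x).card ≤ Nr) (hNX : Nr ≤ X.card) {n : ℕ} (hn : 1 ≤ n) :
    ((noIsolatedSets d r X n).card : ℝ) ≤ qseq n * √(X.card * Nr) ^ n := by
  have hsq : √((X.card : ℝ) * Nr) ^ 2 = X.card * Nr := Real.sq_sqrt (by positivity)
  have hNr : (Nr : ℝ) ≤ √(X.card * Nr) :=
    (Real.le_sqrt (by positivity) (by positivity)).mpr (by rw [sq]; gcongr)
  refine le_qseq_mul_pow (a := fun k => ((noIsolatedSets d r X k).card : ℝ))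
    (Real.sqrt_nonneg _) (by exact_mod_cast card_noIsolatedSets_zero_le X)
    (by simp [noIsolatedSets_one]) (fun k => ?_) hn
  calc ((noIsolatedSets d r X (k + 2)).card : ℝ)
      ≤ (k + 1) * Nr * (noIsolatedSets d r X (k + 1)).card +
          X.card * Nr * (noIsolatedSets d r X k).card := by
        exact_mod_cast card_noIsolatedSets_add_two_le hsym hN k
    _ ≤ (k + 1) * √(X.card * Nr) * (noIsolatedSets d r X (k + 1)).card +
          √(X.card * Nr) ^ 2 * (noIsolatedSets d r X k).card := by
        rw [hsq]
        gcongr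

end

theorem stmt4_general {Λ : Type*} [DecidableEq Λ] (d : Λ → Λ → ℝ)
    (hsym : ∀ x y, d x y = d y x)
    (X : Finset Λ) (r : ℝ) (Nr : ℕ)
    (hN : ∀ x ∈ X, ({y | y ∈ X ∧ d x y ≤ r} : Set Λ).ncard ≤ Nr)
    (n : ℕ) (hn : 2 ≤ n) :
    (countSpread d X n r : ℝ) ≤ (qseq n : ℝ) * ((X.card : ℝ) * (Nr : ℝ)) ^ ((n : ℝ) / 2) := by
  -- Every neighbourhood lies in `X`, so `N_r` may be replaced by `min N_r |X|`.
  have hN' : ∀ x ∈ X, (nbhd d r X x).card ≤ min Nr X.card := fun x hx =>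
    le_min (ncard_setOf_eq_card_nbhd ▸ hN x hx) (Finset.card_filter_le _ _)
  calc (countSpread d X n r : ℝ) ≤ (noIsolatedSets d r X n).card := by
        exact_mod_cast countSpread_le_card_noIsolatedSets X hn
    _ ≤ qseq n * √(X.card * (min Nr X.card : ℕ)) ^ n :=
        card_noIsolatedSets_le hsym hN' (min_le_right _ _) (by omega)
    _ ≤ qseq n * √(X.card * Nr) ^ n := by
        gcongr
        exact_mod_cast min_le_left _ _
    _ = qseq n * (X.card * Nr) ^ ((n : ℝ) / 2) := by
        rw [Real.rpow_div_two_eq_sqrt _ (by positivity), Real.rpow_natCast]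

theorem stmt4 {Λ : Type*} [DecidableEq Λ] (d : Λ → Λ → ℝ)
    (hsym : ∀ x y, d x y = d y x) (hnonneg : ∀ x y, 0 ≤ d x y)
    (X : Finset Λ) (r : ℝ) (hr : 0 < r) (Nr : ℕ)
    (hN : ∀ x ∈ X, ({y | y ∈ X ∧ d x y ≤ r} : Set Λ).ncard ≤ Nr)
    (n : ℕ) (hn : 2 ≤ n) :
    (countSpread d X n r : ℝ) ≤ (qseq n : ℝ) * ((X.card : ℝ) * (Nr : ℝ)) ^ ((n : ℝ) / 2) :=
  stmt4_general d hsym X r Nr hN n hn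
end

section
/- Let A be a unital normed ℂ-algebra with submultiplicative norm and ω : A → ℂ a linear functional with |ω(a)| ≤ ‖a‖ for all a. Let n ≥ 1, let a₁,…,aₙ ∈ ker ω, and let X be a finite set with |X| ≥ n. Then |M_X(a₁,…,aₙ) − (∏_{l=0}^{n/2−1}(1 − l/|X|))·Q(a₁,…,aₙ)| ≤ |X|^{−1/2} · ‖a₁‖⋯‖aₙ‖ · ∑_{k=1}^{n} S(k,n)·[2k+1 ≤ n], where [2k+1 ≤ n] is 1 if 2k+1 ≤ n and 0 otherwise, and for odd n the product-term coefficient multiplies Q = 0. -/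
open scoped BigOperators

/-- The cluster operator `a^x_y := ∏_{i ∈ x⁻¹(y)} a_i`, the product being taken in
increasing order of the index `i`. -/
def clusterOp {A : Type*} [Monoid A] {X : Type*} [DecidableEq X] {n : ℕ}
    (a : Fin n → A) (x : Fin n → X) (y : X) : A :=
  (((List.finRange n).filter (fun i => decide (x i = y))).map a).prod

/-- The product-state fluctuation moment
`M_X(a₁,…,aₙ) := |X|^{−n/2} ∑_{x : Fin n → X} ∏_{y ∈ im(x)} ω(a^x_y)`. -/
noncomputable def prodMoment {A : Type*} [NormedRing A] [NormedAlgebra ℂ A]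
    {X : Type*} [Fintype X] [DecidableEq X] (ω : A →ₗ[ℂ] ℂ) {n : ℕ} (a : Fin n → A) : ℂ :=
  (((Fintype.card X : ℝ) ^ (-(n : ℝ) / 2) : ℝ) : ℂ) *
    ∑ x : Fin n → X, ∏ y ∈ Finset.image x Finset.univ, ω (clusterOp a x y)

/-- The quasi-free (pair-partition) value
`Q(a₁,…,aₙ) := ∑_{P ∈ Π₂(n)} ∏_{{i,j} ∈ P, i<j} ω(a_i·a_j)`, with pair partitions encoded
as fixed-point-free involutions of `Fin n`; for odd `n` there are no such involutions and
the value is `0`. -/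
noncomputable def qfValue {A : Type*} [NormedRing A] [NormedAlgebra ℂ A]
    (ω : A →ₗ[ℂ] ℂ) {n : ℕ} (a : Fin n → A) : ℂ :=
  ∑ σ ∈ Finset.univ.filter (fun σ : Equiv.Perm (Fin n) => σ * σ = 1 ∧ ∀ i, σ i ≠ i),
    ∏ i ∈ Finset.univ.filter (fun i : Fin n => i < σ i), ω (a i * a (σ i))

/-- Stirling numbers of the second kind: `stirling n k` is the number of partitions of an
`n`-element set into `k` nonempty blocks, via the standard recurrence. -/
def stirling : ℕ → ℕ → ℕ
  | 0, 0 => 1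
  | 0, _ + 1 => 0
  | _ + 1, 0 => 0
  | n + 1, k + 1 => (k + 1) * stirling n (k + 1) + stirling n k

/-! Expanding `M_X` as a sum over colourings `x : Fin n → X`, a colouring with a singleton level set
contributes `0` because `ω (aᵢ) = 0`. The colourings all of whose level sets are pairs are exactly
the injective colourings of the blocks of a pair partition `σ`: each contributes
`∏ ω (aᵢ a_{σ i})`, and there are `|X| (|X| - 1) ⋯ (|X| - n/2 + 1)` of them per `σ`, which after the
normalisation `|X|^{-n/2}` is the coefficient `∏ (1 - l/|X|)` of `Q`. Every other colouring has
all level sets of size `≥ 2` and one of size `≥ 3`, so its image has `k` points with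
`2k + 1 ≤ n`; there are at most `S(n,k) |X|^k` colourings with image of size `k`, each of weight
at most `∏ ‖aᵢ‖`, and `|X|^{k - n/2} ≤ |X|^{-1/2}`. -/

open Finset

section ClusterOp

variable {A X : Type*} [DecidableEq X] {n : ℕ}

theorem clusterOp_eq_prod_sort [Monoid A] (a : Fin n → A) (x : Fin n → X) (y : X) :
    clusterOp a x y = (({k | x k = y} : Finset (Fin n)).sort.map a).prod := by
  have hl := (List.nodup_finRange n).filter (fun i => decide (x i = y))
  have hsort := (List.toFinset_sort (· ≤ ·) hl).2
    (((List.pairwise_lt_finRange n).filter _).imp le_of_lt)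
  rw [clusterOp, ← hsort]
  congr 3
  ext k
  simp

theorem clusterOp_of_filter_eq_singleton [Monoid A] (a : Fin n → A) {x : Fin n → X} {y : X}
    {i : Fin n} (h : ({k | x k = y} : Finset (Fin n)) = {i}) : clusterOp a x y = a i := by
  simp [clusterOp_eq_prod_sort, h]

theorem clusterOp_of_filter_eq_pair [Monoid A] (a : Fin n → A) {x : Fin n → X} {y : X}
    {i j : Fin n} (hij : i < j) (h : ({k | x k = y} : Finset (Fin n)) = {i, j}) :
    clusterOp a x y = a i * a j := by
  rw [clusterOp_eq_prod_sort, h, sort_insert _ (by simpa using hij.le) (by simpa using hij.ne)]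
  simp

theorem norm_clusterOp_le [NormedRing A] (a : Fin n → A) {x : Fin n → X} {y : X}
    (hy : y ∈ univ.image x) : ‖clusterOp a x y‖ ≤ ∏ k with x k = y, ‖a k‖ := by
  obtain ⟨i, -, rfl⟩ := mem_image.1 hy
  rw [clusterOp_eq_prod_sort]
  refine (List.norm_prod_le' ?_).trans_eq ?_
  · simp [← List.length_eq_zero_iff]
  · rw [List.map_map, ← Multiset.prod_coe, ← Multiset.map_coe, sort_eq]; rfl

end ClusterOp

section Counting

variable {X : Type*}

theorem Fin.image_cons_univ [DecidableEq X] {n : ℕ} (x₀ : X) (x : Fin n → X) :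
    univ.image (Fin.cons x₀ x : Fin (n + 1) → X) = insert x₀ (univ.image x) := by
  ext y; simp [Fin.exists_fin_succ, eq_comm]

theorem Fin.card_filter_eq_sum_card_filter_cons [Fintype X] {n : ℕ}
    (p : (Fin (n + 1) → X) → Prop) [DecidablePred p] :
    #{x | p x} = ∑ x : Fin n → X, #{x₀ | p (Fin.cons x₀ x)} := by
  simp only [card_filter]
  rw [← (Fin.consEquiv fun _ => X).sum_comp, Fintype.sum_prod_type, sum_comm]
  rfl

theorem card_filter_card_insert_eq [Fintype X] [DecidableEq X] (s : Finset X) (k : ℕ) :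
    #{x₀ | #(insert x₀ s) = k + 1} =
      (if #s = k + 1 then k + 1 else 0) + (if #s = k then Fintype.card X - k else 0) := by
  by_cases hs : #s = k + 1
  · have : ({x₀ | #(insert x₀ s) = k + 1} : Finset X) = s := by
      ext x₀
      by_cases hx₀ : x₀ ∈ s <;> simp [hx₀, card_insert_of_notMem, hs]
    simp [this, hs]
  by_cases hs' : #s = k
  · have : ({x₀ | #(insert x₀ s) = k + 1} : Finset X) = sᶜ := by
      ext x₀
      by_cases hx₀ : x₀ ∈ s <;> simp [hx₀, card_insert_of_notMem, hs']
    simp [this, hs', card_compl]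
  · have : ({x₀ | #(insert x₀ s) = k + 1} : Finset X) = ∅ := by
      ext x₀
      by_cases hx₀ : x₀ ∈ s <;> simp [hx₀, card_insert_of_notMem, hs, hs']
    simp [this, hs, hs']

theorem card_filter_card_image_eq [Fintype X] [DecidableEq X] (n k : ℕ) :
    #{x : Fin n → X | #(univ.image x) = k} = stirling n k * (Fintype.card X).descFactorial k := by
  induction n generalizing k with
  | zero => cases k <;> simp [stirling, eq_comm]
  | succ n ih =>
    cases k with
    | zero => simp [stirling, univ_eq_empty_iff]
    | succ k =>
      simp only [Fin.card_filter_eq_sum_card_filter_cons, Fin.image_cons_univ,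
        card_filter_card_insert_eq, sum_add_distrib, ← sum_filter, sum_const, smul_eq_mul, ih,
        stirling, Nat.descFactorial_succ]
      ring

end Counting

section Pairings

open Equiv Function

variable {α X : Type*}

theorem min_apply_eq_min_apply_iff [LinearOrder α] {σ : α → α} (hσ : Involutive σ)
    {i j : α} :
    min i (σ i) = min j (σ j) ↔ j = i ∨ j = σ i := by
  constructor
  · rcases min_choice i (σ i) with hi | hi <;> rcases min_choice j (σ j) with hj | hj <;>
      rw [hi, hj] <;> intro h
    · exact Or.inl h.symm
    · exact Or.inr (by rw [h, hσ])
    · exact Or.inr h.symm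
    · exact Or.inl (hσ.injective h).symm
  · rintro (rfl | rfl)
    · rfl
    · rw [hσ, min_comm]

theorem lt_apply_min_apply [LinearOrder α] {σ : α → α} (hσ : Involutive σ)
    (hfix : ∀ i, σ i ≠ i) (i : α) : min i (σ i) < σ (min i (σ i)) := by
  rcases le_total i (σ i) with h | h
  · rw [min_eq_left h]; exact h.lt_of_ne (hfix i).symm
  · rw [min_eq_right h, hσ]; exact h.lt_of_ne (hfix i)

theorem two_mul_card_filter_lt_apply [Fintype α] [LinearOrder α] {σ : Perm α}
    (hσ : Involutive σ) (hfix : ∀ i, σ i ≠ i) : 2 * #{i | i < σ i} = Fintype.card α := by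
  have hswap : #{i | σ i < i} = #{i | i < σ i} :=
    card_nbij' σ σ (fun i => by simp [hσ i]) (fun i => by simp [hσ i])
      (fun i _ => hσ i) (fun i _ => hσ i)
  have hcompl : ({i | ¬ i < σ i} : Finset α) = ({i | σ i < i} : Finset α) := by
    ext i; simp [le_iff_lt_or_eq, hfix i]
  rw [← card_univ, ← card_filter_add_card_filter_not (s := univ) (fun i => i < σ i), hcompl,
    hswap, two_mul]

theorem card_filter_eq_iff_eq_of_surjective [Fintype α] [DecidableEq α] {β : Type*} [Fintype β]
    [DecidableEq β] [Fintype X] [DecidableEq X] {q : α → β} (hq : Surjective q) :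
    #{x : α → X | ∀ i j, x i = x j ↔ q i = q j} =
      (Fintype.card X).descFactorial (Fintype.card β) := by
  let comp : (β ↪ X) ↪ (α → X) :=
    ⟨fun g => g ∘ q, hq.injective_comp_right.comp DFunLike.coe_injective⟩
  have : ({x | ∀ i j, x i = x j ↔ q i = q j} : Finset (α → X)) = univ.map comp := by
    ext x
    simp only [mem_filter, mem_univ, true_and, mem_map]
    constructor
    · intro hx
      refine ⟨⟨x ∘ surjInv hq, fun b b' h => ?_⟩, funext fun i => ?_⟩
      · simpa [surjInv_eq hq] using (hx _ _).1 h
      · exact (hx _ _).2 (surjInv_eq hq _)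
    · rintro ⟨g, -, rfl⟩ i j
      exact g.injective.eq_iff
  rw [this, card_map, card_univ, Fintype.card_embedding_eq]

variable [Fintype α] [DecidableEq α]

def pairings (α : Type*) [Fintype α] [DecidableEq α] : Finset (Perm α) :=
  {σ | σ * σ = 1 ∧ ∀ i, σ i ≠ i}

theorem mem_pairings {σ : Perm α} :
    σ ∈ pairings α ↔ Involutive σ ∧ ∀ i, σ i ≠ i := by
  simp [pairings, Perm.ext_iff, Involutive]

variable [Fintype X] [DecidableEq X]

def pairColorings (σ : Perm α) : Finset (α → X) :=
  {x | ∀ i, ({j | x j = x i} : Finset α) = {i, σ i}}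

theorem mem_pairColorings {σ : Perm α} {x : α → X} :
    x ∈ pairColorings σ ↔ ∀ i, ({j | x j = x i} : Finset α) = {i, σ i} := by
  simp [pairColorings]

theorem card_pairColorings [LinearOrder α] {σ : Perm α} (hσ : σ ∈ pairings α) :
    #(pairColorings (X := X) σ) = (Fintype.card X).descFactorial #{i | i < σ i} := by
  obtain ⟨hinv, hfix⟩ := mem_pairings.1 hσ
  let q : α → {i // i < σ i} := fun j => ⟨min j (σ j), lt_apply_min_apply hinv hfix j⟩
  have hq : Surjective q := fun ⟨i, hi⟩ => ⟨i, Subtype.ext (min_eq_left hi.le)⟩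
  have : pairColorings σ = ({x | ∀ i j, x i = x j ↔ q i = q j} : Finset (α → X)) := by
    ext x
    simp only [pairColorings, mem_filter, mem_univ, true_and, Finset.ext_iff, mem_insert,
      mem_singleton, q, Subtype.mk.injEq, min_apply_eq_min_apply_iff hinv]
    exact forall₂_congr fun i j => by rw [eq_comm]
  rw [this, card_filter_eq_iff_eq_of_surjective hq, Fintype.card_subtype]

end Pairings

section PairDecomposition

open Equiv Function

variable {α X : Type*} [DecidableEq α]

theorem exists_eq_pair_of_card_eq_two {s : Finset α} {i : α} (hi : i ∈ s) (hs : #s = 2) :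
    ∃ j, j ≠ i ∧ s = {i, j} := by
  obtain ⟨j, hj⟩ := card_eq_one.1 (by rw [card_erase_of_mem hi, hs] : #(s.erase i) = 1)
  exact ⟨j, (mem_erase.1 (hj ▸ mem_singleton_self j)).1, by rw [← insert_erase hi, hj]⟩

variable [Fintype α] [Fintype X] [DecidableEq X]

theorem mem_biUnion_pairColorings_iff {x : α → X} :
    x ∈ (pairings α).biUnion pairColorings ↔ ∀ i, #{j | x j = x i} = 2 := by
  rw [mem_biUnion]
  constructor
  · rintro ⟨σ, hσ, hx⟩ i
    rw [mem_pairColorings.1 hx i, card_pair ((mem_pairings.1 hσ).2 i).symm]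
  · intro hx
    have : ∀ i, ∃ j, j ≠ i ∧ ({k | x k = x i} : Finset α) = {i, j} := fun i =>
      exists_eq_pair_of_card_eq_two (by simp) (hx i)
    choose τ hτne hτ using this
    have hxτ : ∀ i, x (τ i) = x i := fun i => by simpa using Finset.ext_iff.1 (hτ i) (τ i)
    have hinv : Involutive τ := fun i => by
      have h := hτ (τ i)
      rw [hxτ i, hτ i] at h
      have : τ (τ i) ∈ ({i, τ i} : Finset α) := h ▸ by simp
      simpa [hτne (τ i)] using this
    exact ⟨hinv.toPerm τ, mem_pairings.2 ⟨hinv, hτne⟩, mem_pairColorings.2 hτ⟩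

theorem pairwiseDisjoint_pairColorings :
    (pairings α : Set (Perm α)).PairwiseDisjoint (pairColorings (X := X)) := by
  intro σ hσ τ _ hne
  refine disjoint_left.2 fun x hxσ hxτ => hne (Perm.ext fun i => ?_)
  have : σ i ∈ ({i, τ i} : Finset α) := by
    rw [← mem_pairColorings.1 hxτ i, mem_pairColorings.1 hxσ i]; simp
  simpa [(mem_pairings.1 hσ).2 i] using this

end PairDecomposition

section ClusterWeight

open Equiv

variable {A X : Type*} [DecidableEq X] {n : ℕ}

def clusterWeight [Monoid A] (ω : A → ℂ) (a : Fin n → A) (x : Fin n → X) : ℂ :=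
  ∏ y ∈ univ.image x, ω (clusterOp a x y)

theorem clusterWeight_eq_zero_of_card_eq_one [Monoid A] {ω : A → ℂ} {a : Fin n → A}
    (ha : ∀ i, ω (a i) = 0) {x : Fin n → X} {i : Fin n} (hi : #{k | x k = x i} = 1) :
    clusterWeight ω a x = 0 := by
  obtain ⟨j, hj⟩ := card_eq_one.1 hi
  exact prod_eq_zero (mem_image_of_mem x (mem_univ i))
    (by rw [clusterOp_of_filter_eq_singleton a hj, ha])

theorem norm_clusterWeight_le [NormedRing A] {ω : A → ℂ} (hω : ∀ b, ‖ω b‖ ≤ ‖b‖)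
    (a : Fin n → A) (x : Fin n → X) : ‖clusterWeight ω a x‖ ≤ ∏ i, ‖a i‖ := by
  rw [clusterWeight, norm_prod]
  calc ∏ y ∈ univ.image x, ‖ω (clusterOp a x y)‖
      ≤ ∏ y ∈ univ.image x, ∏ k with x k = y, ‖a k‖ :=
        prod_le_prod (fun _ _ => norm_nonneg _) fun y hy => (hω _).trans (norm_clusterOp_le a hy)
    _ = ∏ i, ‖a i‖ := prod_fiberwise_of_maps_to (fun i _ => mem_image_of_mem x (mem_univ i)) _

theorem clusterWeight_eq_of_mem_pairColorings [Fintype X] [Monoid A] (ω : A → ℂ)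
    (a : Fin n → A) {σ : Perm (Fin n)} (hσ : σ ∈ pairings (Fin n)) {x : Fin n → X}
    (hx : x ∈ pairColorings σ) :
    clusterWeight ω a x = ∏ i with i < σ i, ω (a i * a (σ i)) := by
  obtain ⟨hinv, hfix⟩ := mem_pairings.1 hσ
  have hfib := mem_pairColorings.1 hx
  have hxσ : ∀ i, x (σ i) = x i := fun i => by simpa using Finset.ext_iff.1 (hfib i) (σ i)
  have him : univ.image x = ({i | i < σ i} : Finset (Fin n)).image x := by
    ext y
    simp only [mem_image, mem_filter, mem_univ, true_and]
    constructor
    · rintro ⟨j, rfl⟩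
      rcases (hfix j).lt_or_gt with h | h
      · exact ⟨σ j, by rwa [hinv], hxσ j⟩
      · exact ⟨j, h, rfl⟩
    · rintro ⟨j, -, rfl⟩
      exact ⟨j, rfl⟩
  have hinj : Set.InjOn x {i | i < σ i} := by
    intro i hi j hj hxij
    have : j ∈ ({i, σ i} : Finset (Fin n)) := by rw [← hfib i]; simp [hxij]
    rcases mem_insert.1 this with h | h
    · exact h.symm
    · have hj' : j < σ j := by simpa using hj
      rw [mem_singleton.1 h, hinv] at hj'
      exact absurd (lt_trans hi hj') (lt_irrefl i)
  rw [clusterWeight, him, prod_image (by simpa using hinj)]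
  exact prod_congr rfl fun i hi => by
    rw [clusterOp_of_filter_eq_pair a (mem_filter.1 hi).2 (hfib i)]

end ClusterWeight

theorem prod_one_sub_div_eq_descFactorial_div_pow {c m : ℕ} (hm : m ≤ c) :
    ∏ l ∈ range m, (1 - (l : ℝ) / c) = c.descFactorial m / (c : ℝ) ^ m := by
  have hpow : (c : ℝ) ^ m = ∏ _l ∈ range m, (c : ℝ) := by simp
  rw [Nat.descFactorial_eq_prod_range, Nat.cast_prod, hpow, ← prod_div_distrib]
  refine prod_congr rfl fun l hl => ?_
  have hlc : l < c := (mem_range.1 hl).trans_le hm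
  rw [Nat.cast_sub hlc.le, sub_div, div_self (Nat.cast_ne_zero.2 (by omega))]

section Moments

open Equiv

variable {A X : Type*} [NormedRing A] [NormedAlgebra ℂ A] [Fintype X] {n : ℕ}
  (ω : A →ₗ[ℂ] ℂ) (a : Fin n → A)

theorem qfValue_eq_sum_pairings :
    qfValue ω a = ∑ σ ∈ pairings (Fin n), ∏ i with i < σ i, ω (a i * a (σ i)) := by
  unfold qfValue pairings
  congr

theorem card_filter_lt_apply_of_mem_pairings {σ : Perm (Fin n)} (hσ : σ ∈ pairings (Fin n)) :
    #{i | i < σ i} = n / 2 := by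
  have := two_mul_card_filter_lt_apply (mem_pairings.1 hσ).1 (mem_pairings.1 hσ).2
  rw [Fintype.card_fin] at this
  omega

theorem qfValue_eq_zero_of_odd (hn : Odd n) : qfValue ω a = 0 := by
  rw [qfValue_eq_sum_pairings]
  refine sum_eq_zero fun σ hσ => absurd ?_ (Nat.not_even_iff_odd.2 hn)
  have := two_mul_card_filter_lt_apply (mem_pairings.1 hσ).1 (mem_pairings.1 hσ).2
  rw [Fintype.card_fin] at this
  exact ⟨_, this.symm.trans (two_mul _)⟩

theorem sum_clusterWeight_filter_card_eq_two [DecidableEq X] :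
    ∑ x : Fin n → X with ∀ i, #{j | x j = x i} = 2, clusterWeight ω a x =
      (Fintype.card X).descFactorial (n / 2) * qfValue ω a := by
  have : ({x | ∀ i, #{j | x j = x i} = 2} : Finset (Fin n → X)) =
      (pairings (Fin n)).biUnion pairColorings := by
    ext x
    simpa using mem_biUnion_pairColorings_iff.symm
  rw [this, sum_biUnion pairwiseDisjoint_pairColorings,
    qfValue_eq_sum_pairings, mul_sum]
  refine sum_congr rfl fun σ hσ => ?_
  rw [sum_congr rfl fun x hx => clusterWeight_eq_of_mem_pairColorings ω a hσ hx, sum_const,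
    card_pairColorings hσ, card_filter_lt_apply_of_mem_pairings hσ, nsmul_eq_mul]

theorem sum_clusterWeight_eq [DecidableEq X] (ha : ∀ i, ω (a i) = 0) :
    ∑ x : Fin n → X, clusterWeight ω a x =
      (Fintype.card X).descFactorial (n / 2) * qfValue ω a +
        ∑ x : Fin n → X with (∀ i, 2 ≤ #{j | x j = x i}) ∧ ¬ ∀ i, #{j | x j = x i} = 2,
          clusterWeight ω a x := by
  have hsupp : ∀ x : Fin n → X, clusterWeight ω a x ≠ 0 → ∀ i, 2 ≤ #{j | x j = x i} :=
    fun x hx i => by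
      have : 0 < #{j | x j = x i} := card_pos.2 ⟨i, by simp⟩
      have : #{j | x j = x i} ≠ 1 := fun h => hx (clusterWeight_eq_zero_of_card_eq_one ha h)
      omega
  rw [← sum_filter_of_ne fun x _ => hsupp x,
    ← sum_filter_add_sum_filter_not _ fun x => ∀ i, #{j | x j = x i} = 2, filter_filter,
    filter_filter, ← sum_clusterWeight_filter_card_eq_two]
  congr 2
  ext x
  simp only [mem_filter, mem_univ, true_and, and_iff_right_iff_imp]
  intro h i
  rw [h i]

theorem rpow_mul_descFactorial_mul_qfValue (h : n / 2 ≤ Fintype.card X) :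
    (((Fintype.card X : ℝ) ^ (-(n : ℝ) / 2) : ℝ) : ℂ) *
        ((Fintype.card X).descFactorial (n / 2) * qfValue ω a) =
      ((∏ l ∈ range (n / 2), (1 - (l : ℝ) / Fintype.card X) : ℝ) : ℂ) * qfValue ω a := by
  rcases Nat.even_or_odd n with ⟨m, rfl⟩ | hodd
  · rw [show (m + m) / 2 = m by omega] at h ⊢
    have hpow : (Fintype.card X : ℝ) ^ (-((m + m : ℕ) : ℝ) / 2) =
        ((Fintype.card X : ℝ) ^ m)⁻¹ := by
      rw [← Real.rpow_natCast, ← Real.rpow_neg (by positivity)]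
      push_cast
      ring_nf
    rw [prod_one_sub_div_eq_descFactorial_div_pow h, ← mul_assoc, hpow]
    push_cast
    ring
  · simp [qfValue_eq_zero_of_odd ω a hodd]

end Moments

section ErrorTerm

variable {X : Type*} [DecidableEq X]

theorem two_mul_card_image_lt_card {α : Type*} [Fintype α] {x : α → X}
    (h2 : ∀ i, 2 ≤ #{j | x j = x i}) (h3 : ¬ ∀ i, #{j | x j = x i} = 2) :
    2 * #(univ.image x) < Fintype.card α := by
  obtain ⟨i₀, hi₀⟩ := not_forall.1 h3
  rw [← card_univ, card_eq_sum_card_image x univ, mul_comm, ← smul_eq_mul, ← sum_const]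
  refine sum_lt_sum (fun y hy => ?_) ⟨x i₀, mem_image_of_mem x (mem_univ _), ?_⟩
  · obtain ⟨i, -, rfl⟩ := mem_image.1 hy
    exact h2 i
  · exact (h2 i₀).lt_of_ne' hi₀

theorem card_filter_not_pair_le [Fintype X] (n : ℕ) :
    #{x : Fin n → X | (∀ i, 2 ≤ #{j | x j = x i}) ∧ ¬ ∀ i, #{j | x j = x i} = 2} ≤
      ∑ k ∈ Icc 1 n with 2 * k + 1 ≤ n, stirling n k * Fintype.card X ^ k := by
  calc _ ≤ #({k ∈ Icc 1 n | 2 * k + 1 ≤ n}.biUnion fun k =>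
          ({x | #(univ.image x) = k} : Finset (Fin n → X))) := by
        refine card_le_card fun x hx => ?_
        obtain ⟨h2, h3⟩ := (mem_filter.1 hx).2
        have hlt := two_mul_card_image_lt_card h2 h3
        rw [Fintype.card_fin] at hlt
        have hpos : 0 < #(univ.image x) :=
          card_pos.2 ((univ_nonempty_iff.2 ⟨⟨0, by omega⟩⟩).image x)
        simp only [mem_biUnion, mem_filter, mem_Icc, mem_univ, true_and]
        exact ⟨_, ⟨⟨hpos, by omega⟩, hlt⟩, rfl⟩
    _ ≤ ∑ k ∈ Icc 1 n with 2 * k + 1 ≤ n,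
          #({x | #(univ.image x) = k} : Finset (Fin n → X)) := card_biUnion_le
    _ ≤ _ := sum_le_sum fun k _ => by
        rw [card_filter_card_image_eq]
        exact Nat.mul_le_mul_left _ (Nat.descFactorial_le_pow _ _)

theorem norm_sum_clusterWeight_not_pair_le [Fintype X] {A : Type*} [NormedRing A] {ω : A → ℂ}
    (hω : ∀ b, ‖ω b‖ ≤ ‖b‖) {n : ℕ} (a : Fin n → A) :
    ‖∑ x : Fin n → X with (∀ i, 2 ≤ #{j | x j = x i}) ∧ ¬ ∀ i, #{j | x j = x i} = 2,
        clusterWeight ω a x‖ ≤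
      (∑ k ∈ Icc 1 n with 2 * k + 1 ≤ n, (stirling n k : ℝ) * Fintype.card X ^ k) *
        ∏ i, ‖a i‖ := by
  refine (norm_sum_le_of_le _ fun x _ => norm_clusterWeight_le hω a x).trans ?_
  rw [sum_const, nsmul_eq_mul]
  gcongr
  exact_mod_cast card_filter_not_pair_le n

end ErrorTerm

theorem rpow_neg_half_mul_pow_le {c : ℝ} (hc : 1 ≤ c) {n k : ℕ} (hk : 2 * k + 1 ≤ n) :
    c ^ (-(n : ℝ) / 2) * c ^ k ≤ c ^ (-(1 : ℝ) / 2) := by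
  have hk' : (2 * k + 1 : ℝ) ≤ n := by exact_mod_cast hk
  rw [← Real.rpow_natCast, ← Real.rpow_add (by linarith)]
  exact Real.rpow_le_rpow_of_exponent_le hc (by linarith)

theorem rpow_neg_half_mul_sum_stirling_le {c : ℝ} (hc : 1 ≤ c) (n : ℕ) :
    c ^ (-(n : ℝ) / 2) * ∑ k ∈ Icc 1 n with 2 * k + 1 ≤ n, (stirling n k : ℝ) * c ^ k ≤
      c ^ (-(1 : ℝ) / 2) *
        ∑ k ∈ Icc 1 n, (stirling n k : ℝ) * (if 2 * k + 1 ≤ n then 1 else 0) := by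
  simp only [mul_ite, mul_one, mul_zero, ← sum_filter, mul_sum]
  refine sum_le_sum fun k hk => ?_
  calc c ^ (-(n : ℝ) / 2) * ((stirling n k : ℝ) * c ^ k)
      = c ^ (-(n : ℝ) / 2) * c ^ k * stirling n k := by ring
    _ ≤ c ^ (-(1 : ℝ) / 2) * stirling n k := by
      gcongr
      exact rpow_neg_half_mul_pow_le hc (mem_filter.1 hk).2

theorem stmt12 {A : Type*} [NormedRing A] [NormedAlgebra ℂ A]
    {X : Type*} [Fintype X] [DecidableEq X]
    (ω : A →ₗ[ℂ] ℂ) (hω : ∀ a : A, ‖ω a‖ ≤ ‖a‖)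
    (n : ℕ) (hn : 1 ≤ n) (a : Fin n → A) (ha : ∀ i, ω (a i) = 0)
    (hX : n ≤ Fintype.card X) :
    ‖prodMoment (X := X) ω a -
        ((∏ l ∈ Finset.range (n / 2), (1 - (l : ℝ) / (Fintype.card X : ℝ)) : ℝ) : ℂ) *
          qfValue ω a‖ ≤
      (Fintype.card X : ℝ) ^ (-(1 : ℝ) / 2) * (∏ i, ‖a i‖) *
        ∑ k ∈ Finset.Icc 1 n, (stirling n k : ℝ) * (if 2 * k + 1 ≤ n then 1 else 0) := by
  have hc : (1 : ℝ) ≤ Fintype.card X := by exact_mod_cast hn.trans hX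
  rw [show prodMoment ω a = (((Fintype.card X : ℝ) ^ (-(n : ℝ) / 2) : ℝ) : ℂ) *
      ∑ x, clusterWeight ω a x from rfl, sum_clusterWeight_eq ω a ha, mul_add,
    rpow_mul_descFactorial_mul_qfValue ω a (by omega), add_sub_cancel_left, norm_mul,
    Complex.norm_of_nonneg (by positivity)]
  calc _ ≤ (Fintype.card X : ℝ) ^ (-(n : ℝ) / 2) *
          ((∑ k ∈ Icc 1 n with 2 * k + 1 ≤ n, (stirling n k : ℝ) * Fintype.card X ^ k) *
            ∏ i, ‖a i‖) :=
        mul_le_mul_of_nonneg_left (norm_sum_clusterWeight_not_pair_le hω a) (by positivity)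
    _ ≤ _ := by
        rw [← mul_assoc, mul_right_comm _ (∏ i, ‖a i‖)]
        exact mul_le_mul_of_nonneg_right (rpow_neg_half_mul_sum_stirling_le hc n) (by positivity)
end
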